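/- Let w be a prefix-shuffle. In the binary tree λ₁(w), every active left leaf precedes every active right leaf in the order of appearance around the tree (preorder/contour order). -/
import Mathlib


/-- The four letters `a, ā, b, b̄`. -/
inductive L4 : Type
  | a | abar | b | bbar
deriving DecidableEq

/-- Prefix-shuffles: every prefix has at least as many `a`'s as `ā`'s and
at least as many `b`'s as `b̄`'s. -/
def IsPrefixShuffle (w : List L4) : Prop :=
  ∀ p ∈ w.inits, p.count L4.abar ≤ p.count L4.a ∧ p.count L4.bbar ≤ p.count L4.b

/-- Binary trees whose leaves carry an activity flag (`true` = active). -/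
inductive BT : Type
  | leaf : Bool → BT
  | node : BT → BT → BT
deriving DecidableEq

/-- `B₁`: a single node with two active leaves. -/
def B1 : BT := BT.node (BT.leaf true) (BT.leaf true)

/-- Apply `g` to the first (in contour/preorder) active leaf whose side is `want`
(`true` = left leaf, `false` = right leaf); `side` is the side of the current subtree. -/
def goFirst (want : Bool) (g : Bool → BT) : Bool → BT → Option BT
  | side, BT.leaf act => if act && (side == want) then some (g act) else none
  | _, BT.node l r =>
    match goFirst want g true l with
    | some l' => some (BT.node l' r)
    | none => (goFirst want g false r).map (fun r' => BT.node l r')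

/-- Apply `g` to the last (in contour/preorder) active leaf whose side is `want`. -/
def goLast (want : Bool) (g : Bool → BT) : Bool → BT → Option BT
  | side, BT.leaf act => if act && (side == want) then some (g act) else none
  | _, BT.node l r =>
    match goLast want g false r with
    | some r' => some (BT.node l r')
    | none => (goLast want g true l).map (fun l' => BT.node l' r)

/-- One step of the recursive construction of `λ₁`:
`a` replaces the last active left leaf by `B₁`, `b` replaces the first active right
leaf by `B₁`, `ā` inactivates the first active right leaf, `b̄` inactivates the last
active left leaf.  (The root position counts as left.) -/
def lamStep (t : BT) : L4 → BT
  | L4.a => (goLast true (fun _ => B1) true t).getD t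
  | L4.b => (goFirst false (fun _ => B1) true t).getD t
  | L4.abar => (goFirst false (fun _ => BT.leaf false) true t).getD t
  | L4.bbar => (goLast true (fun _ => BT.leaf false) true t).getD t

/-- The binary tree `λ₁(w)`. -/
def lam1 (w : List L4) : BT := w.foldl lamStep B1

/-- The list of leaves in contour (preorder) order; each leaf is recorded as
`(side, active)` with `side = true` meaning a left leaf. -/
def leavesList : Bool → BT → List (Bool × Bool)
  | side, BT.leaf act => [(side, act)]
  | _, BT.node l r => leavesList true l ++ leavesList false r

/-- The "good" invariant: no active right leaf occurs before an active left leaf. -/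
def Good (l : List (Bool × Bool)) : Prop :=
  l.Pairwise (fun x y => x = (false, true) → y ≠ (true, true))

lemma goFirst_none {want : Bool} {g : Bool → BT} :
    ∀ (side : Bool) (t : BT), goFirst want g side t = none →
      (want, true) ∉ leavesList side t := by
  intro side t
  induction t generalizing side with
  | leaf act =>
    intro h hm
    simp only [goFirst] at h
    simp only [leavesList, List.mem_singleton, Prod.mk.injEq] at hm
    rw [hm.1, hm.2] at h
    simp at h
  | node l r ihl ihr =>
    intro h hm
    simp only [goFirst] at h
    cases hl : goFirst want g true l with
    | some l' => rw [hl] at h; simp at h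
    | none =>
      rw [hl] at h
      cases hr : goFirst want g false r with
      | some r' => rw [hr] at h; simp at h
      | none =>
        simp only [leavesList, List.mem_append] at hm
        rcases hm with hm | hm
        · exact ihl true hl hm
        · exact ihr false hr hm

lemma goFirst_some {want : Bool} {g : Bool → BT} :
    ∀ (side : Bool) (t : BT) (t' : BT), goFirst want g side t = some t' →
      ∃ l1 l2, leavesList side t = l1 ++ (want, true) :: l2 ∧
        (want, true) ∉ l1 ∧
        leavesList side t' = l1 ++ leavesList want (g true) ++ l2 := by
  intro side t
  induction t generalizing side with
  | leaf act =>
    intro t' h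
    simp only [goFirst] at h
    by_cases hc : act && (side == want)
    · simp only [hc, if_true, Option.some.injEq] at h
      simp only [Bool.and_eq_true, beq_iff_eq] at hc
      refine ⟨[], [], ?_, by simp, ?_⟩
      · simp [leavesList, hc.1, hc.2]
      · subst h
        rw [hc.1, hc.2]
        simp
    · simp [hc] at h
  | node l r ihl ihr =>
    intro t' h
    simp only [goFirst] at h
    cases hl : goFirst want g true l with
    | some l' =>
      rw [hl] at h
      simp only [Option.some.injEq] at h
      obtain ⟨l1, l2, he, hni, he'⟩ := ihl true l' hl
      refine ⟨l1, l2 ++ leavesList false r, ?_, hni, ?_⟩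
      · simp [leavesList, he]
      · subst h
        simp [leavesList, he']
    | none =>
      rw [hl] at h
      cases hr : goFirst want g false r with
      | some r' =>
        rw [hr] at h
        simp only [Option.map_some, Option.some.injEq] at h
        obtain ⟨l1, l2, he, hni, he'⟩ := ihr false r' hr
        refine ⟨leavesList true l ++ l1, l2, ?_, ?_, ?_⟩
        · simp [leavesList, he]
        · intro hm
          rcases List.mem_append.mp hm with hm | hm
          · exact goFirst_none true l hl hm
          · exact hni hm
        · subst h
          simp [leavesList, he']
      | none => rw [hr] at h; simp at h

lemma goLast_none {want : Bool} {g : Bool → BT} :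
    ∀ (side : Bool) (t : BT), goLast want g side t = none →
      (want, true) ∉ leavesList side t := by
  intro side t
  induction t generalizing side with
  | leaf act =>
    intro h hm
    simp only [goLast] at h
    simp only [leavesList, List.mem_singleton, Prod.mk.injEq] at hm
    rw [hm.1, hm.2] at h
    simp at h
  | node l r ihl ihr =>
    intro h hm
    simp only [goLast] at h
    cases hr : goLast want g false r with
    | some r' => rw [hr] at h; simp at h
    | none =>
      rw [hr] at h
      cases hl : goLast want g true l with
      | some l' => rw [hl] at h; simp at h
      | none =>
        simp only [leavesList, List.mem_append] at hm
        rcases hm with hm | hm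
        · exact ihl true hl hm
        · exact ihr false hr hm

lemma goLast_some {want : Bool} {g : Bool → BT} :
    ∀ (side : Bool) (t : BT) (t' : BT), goLast want g side t = some t' →
      ∃ l1 l2, leavesList side t = l1 ++ (want, true) :: l2 ∧
        (want, true) ∉ l2 ∧
        leavesList side t' = l1 ++ leavesList want (g true) ++ l2 := by
  intro side t
  induction t generalizing side with
  | leaf act =>
    intro t' h
    simp only [goLast] at h
    by_cases hc : act && (side == want)
    · simp only [hc, if_true, Option.some.injEq] at h
      simp only [Bool.and_eq_true, beq_iff_eq] at hc
      refine ⟨[], [], ?_, by simp, ?_⟩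
      · simp [leavesList, hc.1, hc.2]
      · subst h
        rw [hc.1, hc.2]
        simp
    · simp [hc] at h
  | node l r ihl ihr =>
    intro t' h
    simp only [goLast] at h
    cases hr : goLast want g false r with
    | some r' =>
      rw [hr] at h
      simp only [Option.some.injEq] at h
      obtain ⟨l1, l2, he, hni, he'⟩ := ihr false r' hr
      refine ⟨leavesList true l ++ l1, l2, ?_, hni, ?_⟩
      · simp [leavesList, he]
      · subst h
        simp [leavesList, he']
    | none =>
      rw [hr] at h
      cases hl : goLast want g true l with
      | some l' =>
        rw [hl] at h
        simp only [Option.map_some, Option.some.injEq] at h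
        obtain ⟨l1, l2, he, hni, he'⟩ := ihl true l' hl
        refine ⟨l1, l2 ++ leavesList false r, ?_, ?_, ?_⟩
        · simp [leavesList, he]
        · intro hm
          rcases List.mem_append.mp hm with hm | hm
          · exact hni hm
          · exact goLast_none false r hr hm
        · subst h
          simp [leavesList, he']
      | none => rw [hl] at h; simp at h

lemma good_insert_a (l1 l2 : List (Bool × Bool))
    (h : Good (l1 ++ (true, true) :: l2)) (hni : (true, true) ∉ l2) :
    Good (l1 ++ (true, true) :: (false, true) :: l2) := by
  simp only [Good, List.pairwise_append, List.pairwise_cons, List.mem_cons] at h ⊢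
  aesop

lemma good_insert_b (l1 l2 : List (Bool × Bool))
    (h : Good (l1 ++ (false, true) :: l2)) (hni : (false, true) ∉ l1) :
    Good (l1 ++ (true, true) :: (false, true) :: l2) := by
  simp only [Good, List.pairwise_append, List.pairwise_cons, List.mem_cons] at h ⊢
  aesop

lemma good_deact (l1 l2 : List (Bool × Bool)) (s s' : Bool)
    (h : Good (l1 ++ (s, true) :: l2)) :
    Good (l1 ++ (s', false) :: l2) := by
  simp only [Good, List.pairwise_append, List.pairwise_cons, List.mem_cons] at h ⊢
  aesop

lemma good_lamStep {t : BT} (h : Good (leavesList true t)) (x : L4) :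
    Good (leavesList true (lamStep t x)) := by
  have hB1 : ∀ s : Bool, leavesList s B1 = [(true, true), (false, true)] := by
    intro s; simp [B1, leavesList]
  cases x with
  | a =>
    simp only [lamStep]
    cases ht : goLast true (fun _ => B1) true t with
    | none => simpa using h
    | some t' =>
      obtain ⟨l1, l2, he, hni, he'⟩ := goLast_some true t t' ht
      rw [he] at h
      simp only [Option.getD_some]
      rw [he', hB1]
      simpa [List.append_assoc] using good_insert_a l1 l2 h hni
  | b =>
    simp only [lamStep]
    cases ht : goFirst false (fun _ => B1) true t with
    | none => simpa using h
    | some t' =>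
      obtain ⟨l1, l2, he, hni, he'⟩ := goFirst_some true t t' ht
      rw [he] at h
      simp only [Option.getD_some]
      rw [he', hB1]
      simpa [List.append_assoc] using good_insert_b l1 l2 h hni
  | abar =>
    simp only [lamStep]
    cases ht : goFirst false (fun _ => BT.leaf false) true t with
    | none => simpa using h
    | some t' =>
      obtain ⟨l1, l2, he, hni, he'⟩ := goFirst_some true t t' ht
      rw [he] at h
      simp only [Option.getD_some]
      rw [he']
      simp only [leavesList]
      simpa [List.append_assoc] using good_deact l1 l2 false false h
  | bbar =>
    simp only [lamStep]
    cases ht : goLast true (fun _ => BT.leaf false) true t with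
    | none => simpa using h
    | some t' =>
      obtain ⟨l1, l2, he, hni, he'⟩ := goLast_some true t t' ht
      rw [he] at h
      simp only [Option.getD_some]
      rw [he']
      simp only [leavesList]
      simpa [List.append_assoc] using good_deact l1 l2 true true h

lemma good_foldl : ∀ (w : List L4) (t : BT), Good (leavesList true t) →
    Good (leavesList true (w.foldl lamStep t))
  | [], t, h => h
  | x :: w, t, h => good_foldl w (lamStep t x) (good_lamStep h x)

lemma good_lam1 (w : List L4) : Good (leavesList true (lam1 w)) := by
  apply good_foldl
  unfold Good
  simp [B1, leavesList]

/-- In `λ₁(w)` for a prefix-shuffle `w`, every active left leaf precedes every active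
right leaf in the contour order. -/
theorem lam1_active_left_before_right (w : List L4) (hw : IsPrefixShuffle w) :
    ∀ i j : ℕ, ∀ hi : i < (leavesList true (lam1 w)).length,
      ∀ hj : j < (leavesList true (lam1 w)).length,
      (leavesList true (lam1 w)).get ⟨i, hi⟩ = (true, true) →
      (leavesList true (lam1 w)).get ⟨j, hj⟩ = (false, true) → i < j := by
  intro i j hi hj hgi hgj
  have hg := good_lam1 w
  unfold Good at hg
  rw [List.pairwise_iff_get] at hg
  by_contra hij
  push_neg at hij
  rcases lt_or_eq_of_le hij with hlt | heq
  · exact hg ⟨j, hj⟩ ⟨i, hi⟩ hlt hgj hgi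
  · subst heq
    rw [hgi] at hgj
    simp at hgj
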